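/- arXiv:2512.06974 — 4 statements merged into one kernel-verified Lean document; each statement's English description precedes it below -/
import Mathlib

section
/- Define recursively the sequence of symmetric matrices V_0 = (1) (1×1) and V_{p+1} = [[V_p, -V_p], [-V_p, 2V_p]] (block matrix of size 2^{p+1}). Then the spectrum of V_{p+1} equals { ((3+√5)/2)·λ : λ ∈ Sp(V_p) } ∪ { ((3-√5)/2)·λ : λ ∈ Sp(V_p) }, counted with multiplicity. In particular, the largest eigenvalue of V_p is ((3+√5)/2)^p and the smallest is ((3-√5)/2)^p. -/
/-!
Over any commutative ring, if `μ + ν = 3` and `μ ν = 1` then the unipotent block matrix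
`S = [[1, 0], [(1 - μ)•1, 1]]` conjugates `[[A, -A], [-A, 2A]]` to the block upper triangular
`[[μA, -A], [0, νA]]`, because `(1, 1 - μ)` is a `μ`-eigenvector of `[[1, -1], [-1, 2]]`.
Hence the characteristic polynomial of the block matrix is `χ(μA) χ(νA)`, and `χ(cA)` is `χ(A)`
with its roots scaled by `c`. With `μ, ν = (3 ± √5)/2` this gives the spectral recursion,
and an induction on it locates the extreme eigenvalues, since `0 ≤ ν ≤ μ`.
-/

open Polynomial

theorem Polynomial.scaleRoots_eq_reflect_comp_reflect {R : Type*} [CommSemiring R]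
    (p : R[X]) (c : R) :
    p.scaleRoots c = ((p.reflect p.natDegree).comp (C c * X)).reflect p.natDegree := by
  ext i
  rw [coeff_scaleRoots, coeff_reflect, comp_C_mul_X_coeff, coeff_reflect, revAt_invol]
  rcases le_or_gt i p.natDegree with hi | hi
  · rw [revAt_le hi, mul_comm]
  · simp [coeff_eq_zero_of_natDegree_lt hi]

theorem Multiset.pow_mem_and_bounds_of_map_add_map {α : Type*}
    [CommSemiring α] [PartialOrder α] [IsOrderedRing α]
    {a b : α} (hb : 0 ≤ b) (hba : b ≤ a) (s : ℕ → Multiset α) (h0 : s 0 = {1})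
    (hs : ∀ p, s (p + 1) = (s p).map (a * ·) + (s p).map (b * ·)) (p : ℕ) :
    a ^ p ∈ s p ∧ b ^ p ∈ s p ∧ ∀ x ∈ s p, b ^ p ≤ x ∧ x ≤ a ^ p := by
  induction p with
  | zero => simp [h0]
  | succ p ih =>
    obtain ⟨ha_mem, hb_mem, hbounds⟩ := ih
    have ha : 0 ≤ a := hb.trans hba
    refine ⟨?_, ?_, ?_⟩
    · rw [hs, pow_succ']
      exact mem_add.2 (.inl (mem_map_of_mem _ ha_mem))
    · rw [hs, pow_succ']
      exact mem_add.2 (.inr (mem_map_of_mem _ hb_mem))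
    · intro x hx
      rw [hs, mem_add, mem_map, mem_map] at hx
      rw [pow_succ', pow_succ']
      rcases hx with ⟨y, hy, rfl⟩ | ⟨y, hy, rfl⟩ <;> obtain ⟨hby, hya⟩ := hbounds y hy
      · exact ⟨mul_le_mul hba hby (pow_nonneg hb p) ha, mul_le_mul_of_nonneg_left hya ha⟩
      · exact ⟨mul_le_mul_of_nonneg_left hby hb,
          mul_le_mul hba hya ((pow_nonneg hb p).trans hby) ha⟩

namespace Matrix

variable {n R : Type*} [Fintype n] [DecidableEq n] [CommRing R]

theorem charpolyRev_smul (c : R) (A : Matrix n n R) :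
    (c • A).charpolyRev = A.charpolyRev.comp (C c * X) := by
  rw [charpolyRev, charpolyRev, ← coe_compRingHom_apply, RingHom.map_det]
  congr 1
  ext i j : 1
  simp only [RingHom.mapMatrix_apply, map_apply, sub_apply, smul_apply, one_apply]
  split_ifs <;> simp <;> ring

/-- The reversed characteristic polynomial `det (1 - X • A)` turns scaling of `A` into the
substitution `X ↦ c X`, which on reversing back is `scaleRoots`. -/
theorem charpoly_smul (c : R) (A : Matrix n n R) :
    (c • A).charpoly = A.charpoly.scaleRoots c := by
  nontriviality R
  have hreflect (M : Matrix n n R) : M.charpoly = M.charpolyRev.reflect (Fintype.card n) := by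
    rw [← reverse_charpoly, reverse, charpoly_natDegree_eq_dim, reflect_reflect]
  rw [scaleRoots_eq_reflect_comp_reflect, hreflect, charpolyRev_smul, charpoly_natDegree_eq_dim,
    ← reverse_charpoly, reverse, charpoly_natDegree_eq_dim]

theorem roots_charpoly_smul [IsDomain R] {c : R} (hc : IsUnit c) (A : Matrix n n R) :
    (c • A).charpoly.roots = A.charpoly.roots.map (c * ·) := by
  rw [charpoly_smul, roots_scaleRoots _ hc]

theorem charpoly_fromBlocks_neg_two_smul {μ ν : R} (hsum : μ + ν = 3) (hprod : μ * ν = 1)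
    (A : Matrix n n R) :
    (fromBlocks A (-A) (-A) ((2 : R) • A)).charpoly = (μ • A).charpoly * (ν • A).charpoly := by
  set S : Matrix (n ⊕ n) (n ⊕ n) R := fromBlocks 1 0 ((1 - μ) • 1) 1
  set S' : Matrix (n ⊕ n) (n ⊕ n) R := fromBlocks 1 0 ((μ - 1) • 1) 1
  have hinv : S * S' = 1 := by
    simp [S, S', fromBlocks_multiply, ← add_smul, fromBlocks_one]
  have htriangular : S' * fromBlocks A (-A) (-A) ((2 : R) • A) * S =
      fromBlocks (μ • A) (-A) 0 (ν • A) := by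
    simp only [S, S', fromBlocks_multiply, Matrix.one_mul, Matrix.mul_one, Matrix.zero_mul,
      Matrix.mul_zero, zero_add, Matrix.smul_mul, Matrix.mul_smul, Matrix.mul_neg]
    congr 1
    · module
    · module
    · linear_combination (norm := module) (μ • hsum - hprod) • A
    · linear_combination (norm := module) (-1 : R) • hsum • A
  rw [← charpoly_fromBlocks_zero₂₁, ← htriangular, charpoly_mul_comm, ← Matrix.mul_assoc, hinv,
    Matrix.one_mul]

theorem roots_charpoly_fromBlocks_neg_two_smul [IsDomain R] {μ ν : R} (hsum : μ + ν = 3)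
    (hprod : μ * ν = 1) (A : Matrix n n R) :
    (fromBlocks A (-A) (-A) ((2 : R) • A)).charpoly.roots =
      A.charpoly.roots.map (μ * ·) + A.charpoly.roots.map (ν * ·) := by
  rw [charpoly_fromBlocks_neg_two_smul hsum hprod,
    roots_mul ((charpoly_monic _).mul (charpoly_monic _)).ne_zero,
    roots_charpoly_smul (.of_mul_eq_one ν hprod),
    roots_charpoly_smul (.of_mul_eq_one_right μ hprod)]

end Matrix

/-- Spectrum of the recursively defined matrices `V_0 = (1)`,
`V_{p+1} = [[V_p, -V_p], [-V_p, 2V_p]]`: the eigenvalues (with multiplicity,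
given as roots of the characteristic polynomial) of `V_{p+1}` are obtained from
those of `V_p` by multiplication by `(3±√5)/2`; consequently the largest
eigenvalue of `V_p` is `((3+√5)/2)^p` and the smallest is `((3-√5)/2)^p`. -/
theorem spectrum_block_recursion
    (V : (p : ℕ) → Matrix (Fin (2 ^ p)) (Fin (2 ^ p)) ℝ)
    (h0 : V 0 = 1)
    (hrec : ∀ p, V (p + 1) =
      Matrix.reindex
        (finSumFinEquiv.trans (finCongr (by rw [pow_succ]; ring)))
        (finSumFinEquiv.trans (finCongr (by rw [pow_succ]; ring)))
        (Matrix.fromBlocks (V p) (-(V p)) (-(V p)) ((2 : ℝ) • V p))) :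
    (∀ p, (V (p + 1)).charpoly.roots =
        (V p).charpoly.roots.map (fun lam => (3 + Real.sqrt 5) / 2 * lam) +
        (V p).charpoly.roots.map (fun lam => (3 - Real.sqrt 5) / 2 * lam))
    ∧ (∀ p, ((3 + Real.sqrt 5) / 2) ^ p ∈ (V p).charpoly.roots
        ∧ ((3 - Real.sqrt 5) / 2) ^ p ∈ (V p).charpoly.roots
        ∧ ∀ lam ∈ (V p).charpoly.roots,
            ((3 - Real.sqrt 5) / 2) ^ p ≤ lam ∧ lam ≤ ((3 + Real.sqrt 5) / 2) ^ p) := by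
  have hsq : Real.sqrt 5 ^ 2 = 5 := Real.sq_sqrt (by norm_num)
  have hprod : (3 + Real.sqrt 5) / 2 * ((3 - Real.sqrt 5) / 2) = 1 := by
    linear_combination (-1 / 4 : ℝ) * hsq
  have hν : 0 ≤ (3 - Real.sqrt 5) / 2 := by nlinarith [Real.sqrt_nonneg 5]
  have hνμ : (3 - Real.sqrt 5) / 2 ≤ (3 + Real.sqrt 5) / 2 := by linarith [Real.sqrt_nonneg 5]
  set μ := (3 + Real.sqrt 5) / 2
  set ν := (3 - Real.sqrt 5) / 2
  have hroots_succ (p : ℕ) : (V (p + 1)).charpoly.roots =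
      (V p).charpoly.roots.map (μ * ·) + (V p).charpoly.roots.map (ν * ·) := by
    rw [hrec p, Matrix.charpoly_reindex]
    exact Matrix.roots_charpoly_fromBlocks_neg_two_smul (by ring) hprod (V p)
  have hroots_zero : (V 0).charpoly.roots = {1} := by
    rw [h0, Matrix.charpoly_one, Fintype.card_fin, pow_zero, pow_one, ← C_1, roots_X_sub_C]
  exact ⟨hroots_succ,
    Multiset.pow_mem_and_bounds_of_map_add_map hν hνμ _ hroots_zero hroots_succ⟩
end

section
/- If λ is an eigenvalue of V_p with eigenvector u, and 𝔞 ∈ ℝ satisfies 𝔞² + 𝔞 - 1 = 0 (i.e. 𝔞 = (-1 ± √5)/2), then the vector (u, 𝔞u) is an eigenvector of V_{p+1} = [[V_p, -V_p], [-V_p, 2V_p]] with eigenvalue (1 - 𝔞)λ = ((3 ∓ √5)/2)λ. -/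
/-!
With `V u = λ u`, the block matrix sends `(u, 𝔞u)` to `((1 - 𝔞)λ u, (2𝔞 - 1)λ u)`, and
`2𝔞 - 1 = (1 - 𝔞)𝔞` is exactly the equation `𝔞² + 𝔞 - 1 = 0`.
-/

open Matrix

namespace Sum

variable {α β γ : Type*}

theorem elim_smul_smul {M : Type*} [SMul M γ] (c : M) (u : α → γ) (v : β → γ) :
    Sum.elim (c • u) (c • v) = c • Sum.elim u v :=
  (Sum.comp_elim (c • ·) u v).symm

theorem elim_ne_zero_of_left [Zero γ] {u : α → γ} (hu : u ≠ 0) (v : β → γ) :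
    Sum.elim u v ≠ 0 :=
  fun h => hu (funext fun i => congrFun h (Sum.inl i))

end Sum

theorem fromBlocks_neg_two_smul_mulVec_elim_smul {R ι : Type*} [CommRing R] [Fintype ι]
    {V : Matrix ι ι R} {u : ι → R} {lam : R} (heig : V *ᵥ u = lam • u) (a : R) :
    fromBlocks V (-V) (-V) ((2 : R) • V) *ᵥ Sum.elim u (a • u) =
      Sum.elim (((1 - a) * lam) • u) (((2 * a - 1) * lam) • u) := by
  ext (i | i) <;>
    simp only [fromBlocks_mulVec, Sum.elim_comp_inl, Sum.elim_comp_inr, neg_mulVec, smul_mulVec,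
      mulVec_smul, heig, Sum.elim_inl, Sum.elim_inr, Pi.add_apply, Pi.neg_apply, Pi.smul_apply,
      smul_eq_mul] <;>
    ring

/-- If `λ` is an eigenvalue of `V` with eigenvector `u` and `𝔞² + 𝔞 - 1 = 0`,
then `(u, 𝔞u)` is an eigenvector of the block matrix `[[V, -V], [-V, 2V]]`
with eigenvalue `(1 - 𝔞)λ`. -/
theorem block_eigenvector (n : ℕ) (V : Matrix (Fin n) (Fin n) ℝ)
    (lam : ℝ) (u : Fin n → ℝ) (hu : u ≠ 0)
    (heig : V.mulVec u = lam • u)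
    (a : ℝ) (ha : a ^ 2 + a - 1 = 0) :
    (Matrix.fromBlocks V (-V) (-V) ((2 : ℝ) • V)).mulVec (Sum.elim u (a • u)) =
      ((1 - a) * lam) • Sum.elim u (a • u) ∧ Sum.elim u (a • u) ≠ 0 := by
  have hcoeff : (2 * a - 1) * lam = ((1 - a) * lam) * a := by linear_combination lam * ha
  refine ⟨?_, Sum.elim_ne_zero_of_left hu _⟩
  rw [fromBlocks_neg_two_smul_mulVec_elim_smul heig, hcoeff, mul_smul _ a u, Sum.elim_smul_smul]
end

section
/- Let X and X' be independent identically distributed random vectors in ℝ^p with independent coordinates, f : ℝ^p → ℝ measurable with E[f(X)²] < ∞, Y = f(X), and for u ⊆ {1,…,p} let Y^{(u)} = f(X^{(u)}) where X^{(u),i} = X^i for i ∈ u and X^{(u),i} = X'^i for i ∉ u. Then Var(E[Y | X^i, i ∈ u]) = Cov(Y, Y^{(u)}). -/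
/-!
Split `X` into the frozen block `U = (X^i)_{i ∈ u}` and the remaining block `V`, and let `V'` be
the remaining block of `X'`. Then `U`, `V`, `V'` are independent, `V'` has the law of `V`, and
`Y = F(U, V)`, `Y^{(u)} = F(U, V')` for one function `F`. Independence gives
`E[Y | U] = k(U)` with `k(a) = E[F(a, V)]`, and Fubini, integrating out `V` and `V'` separately,
gives `E[Y Y^{(u)}] = E[k(U)²]`, while `E[Y] = E[Y^{(u)}] = E[k(U)]`.
-/

open MeasureTheory ProbabilityTheory

section
variable {Ω A B : Type*} [MeasurableSpace Ω] [mA : MeasurableSpace A] [MeasurableSpace B]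
  {P : Measure Ω} {μA : Measure A} {μB : Measure B}
  {U : Ω → A} {V V' : Ω → B} {F : A × B → ℝ}

theorem condExp_prodMk_ae_eq_integral_of_map_eq_prod [IsFiniteMeasure P] [SFinite μA]
    [IsProbabilityMeasure μB] (hU : Measurable U) (hV : Measurable V)
    (hlaw : P.map (fun ω => (U ω, V ω)) = μA.prod μB) (hF : StronglyMeasurable F)
    (hFi : Integrable F (μA.prod μB)) :
    P[fun ω => F (U ω, V ω) | mA.comap U] =ᵐ[P] fun ω => ∫ b, F (U ω, b) ∂μB := by
  have hUV : Measurable fun ω => (U ω, V ω) := hU.prodMk hV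
  have hk : StronglyMeasurable fun a => ∫ b, F (a, b) ∂μB := hF.integral_prod_right'
  have hlawU : P.map U = μA := by
    rw [← Measure.fst_map_prodMk hV, hlaw, Measure.fst_prod]
  have hki : Integrable (fun a => ∫ b, F (a, b) ∂μB) (P.map U) :=
    hlawU ▸ hFi.integral_prod_left
  refine (ae_eq_condExp_of_forall_setIntegral_eq hU.comap_le
    ((integrable_map_measure hF.aestronglyMeasurable hUV.aemeasurable).1 (hlaw ▸ hFi))
    (fun s _ _ => (hki.comp_measurable hU).integrableOn) ?_
    (hk.comp_measurable (comap_measurable U)).aestronglyMeasurable).symm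
  rintro _ ⟨t, ht, rfl⟩ -
  calc ∫ ω in U ⁻¹' t, ∫ b, F (U ω, b) ∂μB ∂P = ∫ a in t, ∫ b, F (a, b) ∂μB ∂μA := by
        rw [← hlawU, setIntegral_map ht hk.aestronglyMeasurable hU.aemeasurable]
    _ = ∫ q in t ×ˢ Set.univ, F q ∂μA.prod μB := by
        rw [setIntegral_prod _ hFi.integrableOn, Measure.restrict_univ]
    _ = ∫ ω in U ⁻¹' t, F (U ω, V ω) ∂P := by
        rw [← hlaw, setIntegral_map (ht.prod .univ) hF.aestronglyMeasurable hUV.aemeasurable,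
          Set.mk_preimage_prod, Set.preimage_univ, Set.inter_univ]

lemma map_prodMk_eq_prod_map_of_map_eq_prod [SFinite μA] [SFinite μB] (hU : Measurable U)
    (hV : Measurable V) {C : Type*} [MeasurableSpace C] {g : B → C} (hg : Measurable g)
    (hlaw : P.map (fun ω => (U ω, V ω)) = μA.prod μB) :
    P.map (fun ω => (U ω, g (V ω))) = μA.prod (μB.map g) := by
  calc P.map (fun ω => (U ω, g (V ω)))
      = (P.map fun ω => (U ω, V ω)).map (Prod.map id g) :=
        (Measure.map_map (measurable_id.prodMap hg) (hU.prodMk hV)).symm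
    _ = μA.prod (μB.map g) := by
        rw [hlaw, ← Measure.map_prod_map _ _ measurable_id hg, Measure.map_id]

theorem variance_condExp_eq_integral_mul_sub [IsProbabilityMeasure P] [IsProbabilityMeasure μA]
    [IsProbabilityMeasure μB] (hU : Measurable U) (hV : Measurable V) (hV' : Measurable V')
    (hlaw : P.map (fun ω => (U ω, V ω, V' ω)) = μA.prod (μB.prod μB))
    (hF : StronglyMeasurable F) (hL2 : MemLp F 2 (μA.prod μB)) :
    Var[P[fun ω => F (U ω, V ω) | mA.comap U]; P] =
      P[fun ω => F (U ω, V ω) * F (U ω, V' ω)] -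
        P[fun ω => F (U ω, V ω)] * P[fun ω => F (U ω, V' ω)] := by
  have hVV' : Measurable fun ω => (V ω, V' ω) := hV.prodMk hV'
  have hlawV : P.map (fun ω => (U ω, V ω)) = μA.prod μB := by
    simpa using map_prodMk_eq_prod_map_of_map_eq_prod hU hVV' measurable_fst hlaw
  have hlawV' : P.map (fun ω => (U ω, V' ω)) = μA.prod μB := by
    simpa using map_prodMk_eq_prod_map_of_map_eq_prod hU hVV' measurable_snd hlaw
  have hlawU : P.map U = μA := by
    rw [← Measure.fst_map_prodMk hV, hlawV, Measure.fst_prod]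
  have hY : MemLp (fun ω => F (U ω, V ω)) 2 P :=
    (hlawV ▸ hL2).comp_of_map (hU.prodMk hV).aemeasurable
  have hY' : MemLp (fun ω => F (U ω, V' ω)) 2 P :=
    (hlawV' ▸ hL2).comp_of_map (hU.prodMk hV').aemeasurable
  set k : A → ℝ := fun a => ∫ b, F (a, b) ∂μB
  have hk : StronglyMeasurable k := hF.integral_prod_right'
  have hcond := condExp_prodMk_ae_eq_integral_of_map_eq_prod hU hV hlawV hF (hL2.integrable one_le_two)
  have hkU : MemLp (fun ω => k (U ω)) 2 P := (hY.condExp one_le_two).ae_eq hcond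
  have hmean (W : Ω → B) (hW : Measurable W)
      (hlawW : P.map (fun ω => (U ω, W ω)) = μA.prod μB) :
      P[fun ω => F (U ω, W ω)] = ∫ q, F q ∂μA.prod μB := by
    rw [← hlawW, integral_map (hU.prodMk hW).aemeasurable (hlawW ▸ hF.aestronglyMeasurable)]
  have hmeank : P[fun ω => k (U ω)] = ∫ q, F q ∂μA.prod μB := by
    rw [integral_prod _ (hL2.integrable one_le_two), ← hlawU,
      integral_map hU.aemeasurable hk.aestronglyMeasurable]
  have hsq : P[(fun ω => k (U ω)) ^ 2] = P[fun ω => F (U ω, V ω) * F (U ω, V' ω)] := by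
    have hprod : Integrable (fun ω => F (U ω, V ω) * F (U ω, V' ω)) P := hY.integrable_mul hY'
    have hG : StronglyMeasurable fun q : A × B × B => F (q.1, q.2.1) * F (q.1, q.2.2) := by
      fun_prop
    calc P[(fun ω => k (U ω)) ^ 2] = ∫ a, k a * k a ∂μA := by
          simp only [Pi.pow_apply, sq]
          rw [← hlawU, integral_map (f := fun a => k a * k a) hU.aemeasurable
            (hk.mul hk).aestronglyMeasurable]
      _ = ∫ q, F (q.1, q.2.1) * F (q.1, q.2.2) ∂μA.prod (μB.prod μB) := by
          rw [integral_prod]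
          · congr with a
            exact (integral_prod_mul (fun b => F (a, b)) (fun b => F (a, b))).symm
          · rw [← hlaw]
            exact (integrable_map_measure hG.aestronglyMeasurable
              (hU.prodMk hVV').aemeasurable).2 hprod
      _ = P[fun ω => F (U ω, V ω) * F (U ω, V' ω)] := by
          rw [← hlaw, integral_map (hU.prodMk hVV').aemeasurable (hlaw ▸ hG.aestronglyMeasurable)]
  rw [variance_congr hcond, variance_eq_sub hkU, hsq, hmeank,
    hmean V hV hlawV, hmean V' hV' hlawV', sq]

end

lemma map_prodMk_eq_pi_prod_pi {Ω ι β : Type*} [MeasurableSpace Ω] [Fintype ι]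
    [MeasurableSpace β] {P : Measure Ω} [IsProbabilityMeasure P] {X X' : Ω → ι → β}
    (hX : ∀ i, Measurable fun ω => X ω i) (hX' : ∀ i, Measurable fun ω => X' ω i)
    (hindep : iIndepFun (Sum.elim (fun i ω => X ω i) (fun i ω => X' ω i)) P)
    (hid : ∀ i, IdentDistrib (fun ω => X ω i) (fun ω => X' ω i) P P) :
    P.map (fun ω => (X ω, X' ω)) =
      (Measure.pi fun i => P.map fun ω => X ω i).prod
        (Measure.pi fun i => P.map fun ω => X ω i) := by
  have hZ : ∀ j, Measurable (Sum.elim (fun i ω => X ω i) (fun i ω => X' ω i) j) :=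
    Sum.rec hX hX'
  calc P.map (fun ω => (X ω, X' ω))
      = (P.map fun ω j => Sum.elim (fun i ω => X ω i) (fun i ω => X' ω i) j ω).map
          (MeasurableEquiv.sumPiEquivProdPi fun _ => β) := by
        rw [Measure.map_map (MeasurableEquiv.measurable _) (measurable_pi_lambda _ hZ)]
        rfl
    _ = _ := by
        rw [hindep.map_fun_eq_pi_map fun j => (hZ j).aemeasurable,
          (measurePreserving_sumPiEquivProdPi _).map_eq]
        congr 2
        funext i
        exact (hid i).map_eq.symm

lemma map_restrict_prod_restrict_compl {ι : Type*} [Fintype ι] {α : ι → Type*}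
    [∀ i, MeasurableSpace (α i)] (μ : ∀ i, Measure (α i)) [∀ i, IsProbabilityMeasure (μ i)]
    (p : ι → Prop) [DecidablePred p] :
    ((Measure.pi μ).prod (Measure.pi μ)).map
        (fun q => (fun i : Subtype p => q.1 i, fun i : {i // ¬p i} => q.1 i,
          fun i : {i // ¬p i} => q.2 i)) =
      (Measure.pi fun i : Subtype p => μ i).prod
        ((Measure.pi fun i : {i // ¬p i} => μ i).prod (Measure.pi fun i : {i // ¬p i} => μ i)) := by
  set e := MeasurableEquiv.piEquivPiSubtypeProd α p
  have he := (measurePreserving_piEquivPiSubtypeProd μ p).map_eq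
  have hsnd : (Measure.pi μ).map (Prod.snd ∘ e) = Measure.pi fun i : {i // ¬p i} => μ i := by
    rw [← Measure.map_map measurable_snd e.measurable, he, Measure.map_snd_prod, measure_univ,
      one_smul]
  calc _ = (((Measure.pi μ).map e).prod ((Measure.pi μ).map (Prod.snd ∘ e))).map
        MeasurableEquiv.prodAssoc := by
        rw [Measure.map_prod_map _ _ e.measurable (measurable_snd.comp e.measurable),
          Measure.map_map MeasurableEquiv.prodAssoc.measurable (by fun_prop)]
        rfl
    _ = _ := by rw [he, hsnd, (measurePreserving_prodAssoc _ _ _).map_eq]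

lemma iSup_comap_apply_eq_comap_restrict {ι Ω : Type*} {β : ι → Type*}
    [m : ∀ i, MeasurableSpace (β i)] (X : Ω → ∀ i, β i) (s : Finset ι) :
    ⨆ i ∈ s, (m i).comap (fun ω => X ω i) = MeasurableSpace.pi.comap fun ω (i : s) => X ω i := by
  rw [MeasurableSpace.pi, MeasurableSpace.comap_iSup, iSup_subtype']
  simp_rw [MeasurableSpace.comap_comp]
  rfl

/-- Pick-Freeze identity: with `X, X'` independent with independent coordinates and
identically distributed, `Y = f(X)` and `Y^{(u)} = f(X^{(u)})` where `X^{(u)}`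
keeps the coordinates of `X` in `u` and those of `X'` outside `u`, one has
`Var(E[Y | X^i, i ∈ u]) = Cov(Y, Y^{(u)})`. -/
theorem pick_freeze (p : ℕ) {Ω : Type*} [MeasureSpace Ω]
    [IsProbabilityMeasure (ℙ : Measure Ω)]
    (X X' : Ω → Fin p → ℝ) (f : (Fin p → ℝ) → ℝ)
    (hf : Measurable f)
    (hX : ∀ i, Measurable fun ω => X ω i)
    (hX' : ∀ i, Measurable fun ω => X' ω i)
    (hindep : iIndepFun (m := fun _ : Fin p ⊕ Fin p => (inferInstance : MeasurableSpace ℝ))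
      (Sum.elim (fun i ω => X ω i) (fun i ω => X' ω i)) ℙ)
    (hid : ∀ i, IdentDistrib (fun ω => X ω i) (fun ω => X' ω i) ℙ ℙ)
    (hL2 : MemLp (fun ω => f (X ω)) 2 ℙ)
    (u : Finset (Fin p)) :
    variance
      (ℙ[(fun ω => f (X ω)) |
        ⨆ i ∈ u, MeasurableSpace.comap (fun ω => X ω i) inferInstance]) ℙ
    = (∫ ω, f (X ω) * f (fun i => if i ∈ u then X ω i else X' ω i) ∂ℙ)
      - (∫ ω, f (X ω) ∂ℙ) *
        (∫ ω, f (fun i => if i ∈ u then X ω i else X' ω i) ∂ℙ) := by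
  set ν := fun i => (ℙ : Measure Ω).map fun ω => X ω i
  have : ∀ i, IsProbabilityMeasure (ν i) :=
    fun i => Measure.isProbabilityMeasure_map (hX i).aemeasurable
  set e := MeasurableEquiv.piEquivPiSubtypeProd (fun _ : Fin p => ℝ) (· ∈ u)
  have hXm : Measurable X := measurable_pi_lambda _ hX
  have hX'm : Measurable X' := measurable_pi_lambda _ hX'
  have hlawXX' := map_prodMk_eq_pi_prod_pi hX hX' hindep hid
  have hlawX : (ℙ : Measure Ω).map X = Measure.pi ν := by
    rw [← Measure.fst_map_prodMk hX'm, hlawXX', Measure.fst_prod]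
  have hlaw := map_restrict_prod_restrict_compl ν (· ∈ u)
  rw [← hlawXX', Measure.map_map (by fun_prop) (hXm.prodMk hX'm)] at hlaw
  have hL2' : MemLp (f ∘ e.symm) 2 _ :=
    ((memLp_map_measure_iff hf.aestronglyMeasurable hXm.aemeasurable).2 hL2).comp_measurePreserving
      (hlawX ▸ (measurePreserving_piEquivPiSubtypeProd ν (· ∈ u)).symm)
  have key := variance_condExp_eq_integral_mul_sub (U := fun ω (i : u) => X ω i)
    (V := fun ω (i : {i // i ∉ u}) => X ω i) (V' := fun ω (i : {i // i ∉ u}) => X' ω i)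
    (by fun_prop) (by fun_prop) (by fun_prop) hlaw (hf.comp e.symm.measurable).stronglyMeasurable
    hL2'
  rw [iSup_comap_apply_eq_comap_restrict]
  have hY (ω : Ω) : f (X ω) = (f ∘ e.symm) (e (X ω)) :=
    congrArg f (e.symm_apply_apply (X ω)).symm
  simp only [hY]
  -- `e.symm` glues the `u`-coordinates of its first argument to the others of its second, so
  -- `f (e.symm ((e (X ω)).1, (e (X' ω)).2))` is `f (X^{(u)} ω)` by definition.
  exact key
end

section
/- Let A be a real symmetric positive semidefinite q×q matrix given by A_{i,j} = σ² Σ_{u ∈ Υ} a_u N_{u,i} N_{u,j}, where σ² > 0, a is a probability distribution on Υ (subsets of {1,…,p}, q = 2^p) with min_u a_u > 0, and N = M^{-1} with N_{u,v} = 1_{v ⊆ u}. Then the smallest eigenvalue of A is at least σ² (min_u a_u) ((3-√5)/2)^p. -/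
/-!
The Rayleigh quotient of `A` at `v` is `σ² ∑ᵤ aᵤ (N v)ᵤ² / ‖v‖² ≥ σ² (min a) ‖N v‖² / ‖v‖²`, so it
suffices that `‖N v‖² ≥ c ^ p ‖v‖²` with `c = (3 - √5) / 2`. Adding an element `x` to the ground
set, split `v` into its values `v₀` on subsets without `x` and `v₁` on subsets with `x`; then `N v`
becomes `(N v₀, N v₀ + N v₁)`, i.e. `N` gets the block form `[[N, 0], [N, N]]`. Since `c` is the
smallest eigenvalue of `[[2, 1], [1, 1]]`, `y₀² + (y₀ + y₁)² ≥ c (y₀² + y₁²)` pointwise, and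
induction on the ground set gives the factor `c ^ p`.
-/

open Finset Matrix

lemma le_of_hasEigenvalue_of_forall_mul_dotProduct_le {ι : Type*} [Fintype ι] [DecidableEq ι]
    {A : Matrix ι ι ℝ} {c μ : ℝ} (hA : ∀ v, c * (v ⬝ᵥ v) ≤ v ⬝ᵥ A *ᵥ v)
    (hμ : Module.End.HasEigenvalue (toLin' A) μ) : c ≤ μ := by
  obtain ⟨v, hv⟩ := hμ.exists_hasEigenvector
  have hAv : A *ᵥ v = μ • v := by simpa only [toLin'_apply] using hv.apply_eq_smul
  have hvv : 0 < v ⬝ᵥ v := by simpa using dotProduct_star_self_pos_iff.mpr hv.2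
  refine le_of_mul_le_mul_right ?_ hvv
  simpa only [hAv, dotProduct_smul, smul_eq_mul, mul_comm μ] using hA v

lemma dotProduct_mulVec_eq_sum_mul_sq {ι κ : Type*} [Fintype ι] [Fintype κ]
    {A : Matrix ι ι ℝ} {N : Matrix κ ι ℝ} {s : ℝ} {a : κ → ℝ}
    (hA : ∀ i j, A i j = s * ∑ u, a u * N u i * N u j) (v : ι → ℝ) :
    v ⬝ᵥ A *ᵥ v = s * ∑ u, a u * (N *ᵥ v) u ^ 2 := by
  simp only [dotProduct, mulVec, hA, sq, mul_sum, sum_mul]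
  rw [sum_comm_cycle]
  exact sum_congr rfl fun i _ => sum_congr rfl fun j _ => sum_congr rfl fun u _ => by ring

lemma mulVec_apply_eq_sum_powerset {α : Type*} [Fintype α] [DecidableEq α]
    {N : Matrix (Finset α) (Finset α) ℝ} (hN : ∀ u v, N u v = if v ⊆ u then 1 else 0)
    (x : Finset α → ℝ) (u : Finset α) : (N *ᵥ x) u = ∑ v ∈ u.powerset, x v := by
  simp only [mulVec, dotProduct, hN, ite_mul, one_mul, zero_mul, sum_ite, sum_const_zero,
    add_zero, filter_subset_univ]

lemma three_sub_sqrt_five_div_two_nonneg : 0 ≤ (3 - √5) / 2 := by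
  nlinarith [Real.sq_sqrt (show (0 : ℝ) ≤ 5 by norm_num), Real.sqrt_nonneg 5]

lemma three_sub_sqrt_five_div_two_mul_sq_add_sq_le (y₀ y₁ : ℝ) :
    (3 - √5) / 2 * (y₀ ^ 2 + y₁ ^ 2) ≤ y₀ ^ 2 + (y₀ + y₁) ^ 2 := by
  nlinarith [sq_nonneg ((1 + √5) * y₀ + 2 * y₁), Real.sq_sqrt (show (0 : ℝ) ≤ 5 by norm_num),
    Real.sqrt_nonneg 5]

lemma pow_card_mul_sum_sq_le_sum_sq_sum_powerset {α : Type*} [DecidableEq α] (S : Finset α)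
    (x : Finset α → ℝ) :
    ((3 - √5) / 2) ^ #S * ∑ u ∈ S.powerset, x u ^ 2 ≤
      ∑ u ∈ S.powerset, (∑ v ∈ u.powerset, x v) ^ 2 := by
  induction S using Finset.induction_on generalizing x with
  | empty => simp
  | @insert a S ha ih =>
    set c : ℝ := (3 - √5) / 2
    have hsplit : ∀ u ∈ S.powerset, ∑ v ∈ (insert a u).powerset, x v =
        ∑ v ∈ u.powerset, x v + ∑ v ∈ u.powerset, x (insert a v) := fun u hu =>
      sum_powerset_insert (fun h => ha (mem_powerset.mp hu h)) x
    have hblock : c * (∑ u ∈ S.powerset, (∑ v ∈ u.powerset, x v) ^ 2 +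
          ∑ u ∈ S.powerset, (∑ v ∈ u.powerset, x (insert a v)) ^ 2) ≤
        ∑ u ∈ S.powerset, (∑ v ∈ u.powerset, x v) ^ 2 +
          ∑ u ∈ S.powerset, (∑ v ∈ (insert a u).powerset, x v) ^ 2 := by
      rw [← sum_add_distrib, mul_sum, ← sum_add_distrib]
      refine sum_le_sum fun u hu => ?_
      rw [hsplit u hu]
      exact three_sub_sqrt_five_div_two_mul_sq_add_sq_le _ _
    have hc : 0 ≤ c := three_sub_sqrt_five_div_two_nonneg
    have h₀ := mul_le_mul_of_nonneg_left (ih x) hc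
    have h₁ := mul_le_mul_of_nonneg_left (ih fun v => x (insert a v)) hc
    rw [sum_powerset_insert ha, sum_powerset_insert ha, card_insert_of_notMem ha, pow_succ]
    nlinarith

theorem hessian_smallest_eigenvalue_bound_general (p : ℕ)
    (s2 : ℝ) (hs2 : 0 < s2)
    (a : Finset (Fin p) → ℝ)
    (ha_pos : ∀ u, 0 < a u)
    (N : Matrix (Finset (Fin p)) (Finset (Fin p)) ℝ)
    (hN : ∀ u v, N u v = if v ⊆ u then (1 : ℝ) else 0)
    (A : Matrix (Finset (Fin p)) (Finset (Fin p)) ℝ)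
    (hA : ∀ i j, A i j = s2 * ∑ u : Finset (Fin p), a u * N u i * N u j) :
    ∀ μ : ℝ, Module.End.HasEigenvalue (Matrix.toLin' A) μ →
      s2 * (Finset.univ.inf' Finset.univ_nonempty a) *
        ((3 - Real.sqrt 5) / 2) ^ p ≤ μ := by
  intro μ hμ
  refine le_of_hasEigenvalue_of_forall_mul_dotProduct_le (fun v => ?_) hμ
  set amin := univ.inf' univ_nonempty a
  have hamin : ∀ u, amin ≤ a u := fun u => inf'_le a (mem_univ u)
  have hamin_nonneg : 0 ≤ amin := (lt_inf'_iff _).mpr (fun u _ => ha_pos u) |>.le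
  have hNv : ((3 - √5) / 2) ^ p * (v ⬝ᵥ v) ≤ ∑ u, (N *ᵥ v) u ^ 2 := by
    simpa [mulVec_apply_eq_sum_powerset hN, dotProduct, sq] using
      pow_card_mul_sum_sq_le_sum_sq_sum_powerset (univ : Finset (Fin p)) v
  calc s2 * amin * ((3 - √5) / 2) ^ p * (v ⬝ᵥ v)
      = s2 * (amin * (((3 - √5) / 2) ^ p * (v ⬝ᵥ v))) := by ring
    _ ≤ s2 * (amin * ∑ u, (N *ᵥ v) u ^ 2) := by gcongr
    _ ≤ s2 * ∑ u, a u * (N *ᵥ v) u ^ 2 := by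
        rw [mul_sum]
        gcongr with u
        exact hamin u
    _ = v ⬝ᵥ A *ᵥ v := (dotProduct_mulVec_eq_sum_mul_sq hA v).symm

/-- Lower bound on the smallest eigenvalue of the Hessian-type matrix
`A = σ² Nᵀ diag(a) N` where `N` is the inverse Möbius matrix of the subset
lattice of `{1,…,p}`: every eigenvalue of `A` is at least
`σ² (min_u a_u) ((3-√5)/2)^p`. -/
theorem hessian_smallest_eigenvalue_bound (p : ℕ)
    (s2 : ℝ) (hs2 : 0 < s2)
    (a : Finset (Fin p) → ℝ)
    (ha_pos : ∀ u, 0 < a u) (ha_sum : ∑ u : Finset (Fin p), a u = 1)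
    (N : Matrix (Finset (Fin p)) (Finset (Fin p)) ℝ)
    (hN : ∀ u v, N u v = if v ⊆ u then (1 : ℝ) else 0)
    (A : Matrix (Finset (Fin p)) (Finset (Fin p)) ℝ)
    (hA : ∀ i j, A i j = s2 * ∑ u : Finset (Fin p), a u * N u i * N u j) :
    ∀ μ : ℝ, Module.End.HasEigenvalue (Matrix.toLin' A) μ →
      s2 * (Finset.univ.inf' Finset.univ_nonempty a) *
        ((3 - Real.sqrt 5) / 2) ^ p ≤ μ :=
  hessian_smallest_eigenvalue_bound_general p s2 hs2 a ha_pos N hN A hA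
end
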